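/- Let Q_1, Q_2, Q_3, W_1, W_2, W_3 be real numbers with Q_1+Q_2+Q_3 < W_1+W_2+W_3. Set C_2 = min(Q_1,Q_2,Q_3,W_1,W_2,W_3), C_1 = min(Q_1+Q_2, Q_2+Q_3, Q_3+Q_1, W_1+W_2, W_2+W_3, W_3+W_1, Q_1+W_2, Q_2+W_3, Q_3+W_1), C_0 = Q_1+Q_2+Q_3, C_{−1} = Q_1+Q_2+Q_3+W_1+W_2+W_3, and assume the genericity conditions C_2 = 0, C_1 > 0, C_0 > 2·C_1 and C_{−1} > 2·C_0. Set X_1 = min(Q_2, Q_3, W_1, W_2) and X_2 = min(Q_2+Q_3, W_1+W_2, Q_3+W_1) − X_1. If min(Q_2,W_1) ≤ min(Q_3,W_2), set Y_1 = Q_1+W_1+min(Q_2,W_1) and Y_2 = C_{−1} − (Q_3+W_3+min(Q_2,W_1)); otherwise set Y_1 = C_{−1} − (Q_3+W_3+min(Q_3,W_2)) and Y_2 = Q_1+W_1+min(Q_3,W_2). Then for each i ∈ {1,2} the point (X_i, Y_i) lies on the tropical spectral curve, i.e. it satisfies at least one of the equations: min(2Y, C_{−1}, 2X+Y, Y+C_0)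 = min(3X+Y, X+Y+C_1), or min(2Y, C_{−1}, 3X+Y, X+Y+C_1) = min(2X+Y, Y+C_0). -/
import Mathlib

/-- A point `(X,Y)` lies on the tropical spectral curve of the ultra-discrete
3-periodic Toda lattice (with `C_2 = 0`) if it lies on the component `Γ_2` or
`Γ_3`. -/
def onTropCurveG2 (C1 C0 Cm1 X Y : ℝ) : Prop :=
  min (min (2 * Y) Cm1) (min (2 * X + Y) (Y + C0)) =
      min (3 * X + Y) (X + Y + C1) ∨
  min (min (2 * Y) Cm1) (min (3 * X + Y) (X + Y + C1)) =
      min (2 * X + Y) (Y + C0)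

private lemma gamma3_aux (C1 C0 Cm1 X Y : ℝ)
    (h1 : 2 * X ≤ Y) (h2 : 2 * X + Y ≤ Cm1) (h3 : 0 ≤ X) (h4 : X ≤ C1) (h5 : 2 * X ≤ C0)
    (hatt : 2 * Y ≤ 2 * X + Y ∨ Cm1 ≤ 2 * X + Y ∨ 3 * X + Y ≤ 2 * X + Y ∨
      X + Y + C1 ≤ 2 * X + Y) :
    min (min (2 * Y) Cm1) (min (3 * X + Y) (X + Y + C1)) = min (2 * X + Y) (Y + C0) := by
  rw [min_eq_left (by linarith : 2 * X + Y ≤ Y + C0)]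
  refine le_antisymm ?_
    (le_min (le_min (by linarith) h2) (le_min (by linarith) (by linarith)))
  rcases hatt with h | h | h | h
  · exact min_le_of_left_le ((min_le_left _ _).trans h)
  · exact min_le_of_left_le ((min_le_right _ _).trans h)
  · exact min_le_of_right_le ((min_le_left _ _).trans h)
  · exact min_le_of_right_le ((min_le_right _ _).trans h)

private lemma gamma2_aux (C1 C0 Cm1 X Y : ℝ)
    (h1 : X + C1 ≤ Y) (h2 : X + Y + C1 ≤ Cm1) (h3 : C1 ≤ X) (h4 : X + C1 ≤ C0)
    (h5 : C1 ≤ 2 * X)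
    (hatt : 2 * Y ≤ X + Y + C1 ∨ Cm1 ≤ X + Y + C1 ∨ 2 * X + Y ≤ X + Y + C1 ∨
      Y + C0 ≤ X + Y + C1) :
    min (min (2 * Y) Cm1) (min (2 * X + Y) (Y + C0)) = min (3 * X + Y) (X + Y + C1) := by
  rw [min_eq_right (by linarith : X + Y + C1 ≤ 3 * X + Y)]
  refine le_antisymm ?_
    (le_min (le_min (by linarith) h2) (le_min (by linarith) (by linarith)))
  rcases hatt with h | h | h | h
  · exact min_le_of_left_le ((min_le_left _ _).trans h)
  · exact min_le_of_left_le ((min_le_right _ _).trans h)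
  · exact min_le_of_right_le ((min_le_left _ _).trans h)
  · exact min_le_of_right_le ((min_le_right _ _).trans h)

set_option maxHeartbeats 4000000 in
/-- For `g = 2`, the two points `(X_1,Y_1)`, `(X_2,Y_2)` produced by the
ultra-discrete eigenvector map lie on the tropical spectral curve. -/
theorem ud_eigenvector_g2_on_curve (Q1 Q2 Q3 W1 W2 W3 C2 C1 C0 Cm1 X1 X2 Y1 Y2 : ℝ)
    (hlt : Q1 + Q2 + Q3 < W1 + W2 + W3)
    (hC2 : C2 = min (min (min Q1 Q2) Q3) (min (min W1 W2) W3))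
    (hC1 : C1 = min (min (min (min (Q1 + Q2) (Q2 + Q3)) (min (Q3 + Q1) (W1 + W2)))
          (min (min (W2 + W3) (W3 + W1)) (min (Q1 + W2) (Q2 + W3)))) (Q3 + W1))
    (hC0 : C0 = Q1 + Q2 + Q3)
    (hCm1 : Cm1 = Q1 + Q2 + Q3 + W1 + W2 + W3)
    (hgen2 : C2 = 0) (hgen1 : 0 < C1) (hgen0 : C0 > 2 * C1) (hgenm1 : Cm1 > 2 * C0)
    (hX1 : X1 = min (min Q2 Q3) (min W1 W2))
    (hX2 : X2 = min (min (Q2 + Q3) (W1 + W2)) (Q3 + W1) - X1)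
    (hY1 : Y1 = if min Q2 W1 ≤ min Q3 W2 then Q1 + W1 + min Q2 W1
                else Cm1 - (Q3 + W3 + min Q3 W2))
    (hY2 : Y2 = if min Q2 W1 ≤ min Q3 W2 then Cm1 - (Q3 + W3 + min Q2 W1)
                else Q1 + W1 + min Q3 W2) :
    onTropCurveG2 C1 C0 Cm1 X1 Y1 ∧ onTropCurveG2 C1 C0 Cm1 X2 Y2 := by
  have h0 : min (min (min Q1 Q2) Q3) (min (min W1 W2) W3) = 0 := hC2.symm.trans hgen2
  have n1 : 0 ≤ Q1 := by rw [← h0]; simp [min_le_iff]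
  have n2 : 0 ≤ Q2 := by rw [← h0]; simp [min_le_iff]
  have n3 : 0 ≤ Q3 := by rw [← h0]; simp [min_le_iff]
  have n4 : 0 ≤ W1 := by rw [← h0]; simp [min_le_iff]
  have n5 : 0 ≤ W2 := by rw [← h0]; simp [min_le_iff]
  have n6 : 0 ≤ W3 := by rw [← h0]; simp [min_le_iff]
  have c1 : C1 ≤ Q1 + Q2 := by rw [hC1]; simp [min_le_iff]
  have c2 : C1 ≤ Q2 + Q3 := by rw [hC1]; simp [min_le_iff]
  have c3 : C1 ≤ Q3 + Q1 := by rw [hC1]; simp [min_le_iff]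
  have c4 : C1 ≤ W1 + W2 := by rw [hC1]; simp [min_le_iff]
  have c5 : C1 ≤ W2 + W3 := by rw [hC1]; simp [min_le_iff]
  have c6 : C1 ≤ W3 + W1 := by rw [hC1]; simp [min_le_iff]
  have c7 : C1 ≤ Q1 + W2 := by rw [hC1]; simp [min_le_iff]
  have c8 : C1 ≤ Q2 + W3 := by rw [hC1]; simp [min_le_iff]
  have c9 : C1 ≤ Q3 + W1 := by rw [hC1]; simp [min_le_iff]
  have hz : Q1 = 0 ∨ Q2 = 0 ∨ Q3 = 0 ∨ W1 = 0 ∨ W2 = 0 ∨ W3 = 0 := by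
    simp only [min_eq_iff] at h0; tauto
  have hcc : C1 = Q1 + Q2 ∨ C1 = Q2 + Q3 ∨ C1 = Q3 + Q1 ∨ C1 = W1 + W2 ∨
      C1 = W2 + W3 ∨ C1 = W3 + W1 ∨ C1 = Q1 + W2 ∨ C1 = Q2 + W3 ∨ C1 = Q3 + W1 := by
    have h := hC1.symm
    simp only [min_eq_iff] at h
    rcases h with ⟨h, -⟩ | ⟨h, -⟩ <;> tauto
  clear hC2 hgen2 hC1 h0
  set M := min (min (Q2 + Q3) (W1 + W2)) (Q3 + W1) with hM
  have m1 : M ≤ Q2 + Q3 := by rw [hM]; simp [min_le_iff]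
  have m2 : M ≤ W1 + W2 := by rw [hM]; simp [min_le_iff]
  have m3 : M ≤ Q3 + W1 := by rw [hM]; simp [min_le_iff]
  have hM3 : M = Q2 + Q3 ∨ M = W1 + W2 ∨ M = Q3 + W1 := by
    rw [hM]
    rcases min_cases (min (Q2 + Q3) (W1 + W2)) (Q3 + W1) with ⟨h, -⟩ | ⟨h, -⟩
    · rw [h]
      rcases min_cases (Q2 + Q3) (W1 + W2) with ⟨h', -⟩ | ⟨h', -⟩
      · exact Or.inl h'
      · exact Or.inr (Or.inl h')
    · exact Or.inr (Or.inr h)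
  clear hM
  simp only [onTropCurveG2]
  rcases le_or_gt (min Q2 W1) (min Q3 W2) with hcond | hcond
  · rw [if_pos hcond] at hY1
    rw [if_pos hcond] at hY2
    have hA1 : min Q2 W1 ≤ Q3 := hcond.trans (min_le_left _ _)
    have hA2 : min Q2 W1 ≤ W2 := hcond.trans (min_le_right _ _)
    have hx : min (min Q2 Q3) (min W1 W2) = min Q2 W1 := by
      rw [min_min_min_comm]; exact min_eq_left hcond
    rw [hx] at hX1
    rcases le_total Q2 W1 with h21 | h21 <;>
      [rw [min_eq_left h21] at hX1 hY1 hY2 hA1 hA2;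
       rw [min_eq_right h21] at hX1 hY1 hY2 hA1 hA2] <;>
    · refine ⟨Or.inr (gamma3_aux C1 C0 Cm1 X1 Y1 ?_ ?_ ?_ ?_ ?_ ?_),
        Or.inl (gamma2_aux C1 C0 Cm1 X2 Y2 ?_ ?_ ?_ ?_ ?_ ?_)⟩ <;>
      first
      | linarith
      | (rcases hcc with hc|hc|hc|hc|hc|hc|hc|hc|hc <;> linarith)
      | (rcases hz with hv|hv|hv|hv|hv|hv <;>
          rcases hcc with hc|hc|hc|hc|hc|hc|hc|hc|hc <;>
          first
          | linarith
          | (rcases hM3 with hm|hm|hm <;> linarith)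
          | (rcases hM3 with hm|hm|hm <;>
              first
              | exact Or.inl (by linarith)
              | exact Or.inr (Or.inl (by linarith))
              | exact Or.inr (Or.inr (Or.inl (by linarith)))
              | exact Or.inr (Or.inr (Or.inr (by linarith)))))
  · rw [if_neg (not_le.mpr hcond)] at hY1
    rw [if_neg (not_le.mpr hcond)] at hY2
    have hB1 : min Q3 W2 < Q2 := hcond.trans_le (min_le_left _ _)
    have hB2 : min Q3 W2 < W1 := hcond.trans_le (min_le_right _ _)
    have hx : min (min Q2 Q3) (min W1 W2) = min Q3 W2 := by
      rw [min_min_min_comm]; exact min_eq_right hcond.le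
    rw [hx] at hX1
    rcases le_total Q3 W2 with h32 | h32 <;>
      [rw [min_eq_left h32] at hX1 hY1 hY2 hB1 hB2;
       rw [min_eq_right h32] at hX1 hY1 hY2 hB1 hB2] <;>
    · refine ⟨Or.inr (gamma3_aux C1 C0 Cm1 X1 Y1 ?_ ?_ ?_ ?_ ?_ ?_),
        Or.inl (gamma2_aux C1 C0 Cm1 X2 Y2 ?_ ?_ ?_ ?_ ?_ ?_)⟩ <;>
      first
      | linarith
      | (rcases hcc with hc|hc|hc|hc|hc|hc|hc|hc|hc <;> linarith)
      | (rcases hz with hv|hv|hv|hv|hv|hv <;>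
          rcases hcc with hc|hc|hc|hc|hc|hc|hc|hc|hc <;>
          first
          | linarith
          | (rcases hM3 with hm|hm|hm <;> linarith)
          | (rcases hM3 with hm|hm|hm <;>
              first
              | exact Or.inl (by linarith)
              | exact Or.inr (Or.inl (by linarith))
              | exact Or.inr (Or.inr (Or.inl (by linarith)))
              | exact Or.inr (Or.inr (Or.inr (by linarith)))))
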